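/- Under Assumption (A1)–(A4), define T(λ,μ) = {t ∈ T(λ) : c^λ_{s,t} e_μ = c^λ_{s,t} for all s ∈ T(λ)}. Then: (i) if T(λ,μ) ≠ ∅ then λ ≥ μ in Λ̃; (ii) for s_i ∈ T(λ_i, μ_i) and t_i ∈ T(λ_i, ν_i) (i = 1,2), the product c^{λ₁}_{s₁,t₁} c^{λ₂}_{s₂,t₂} is zero unless ν₁ = μ₂, and in any case it is an R-linear combination of elements c^λ_{s,t} with λ ≥ λ₁, λ ≥ λ₂, s ∈ T(λ, μ₁), and t ∈ T(λ, ν₂). -/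

import Mathlib

open MulOpposite

noncomputable section

universe u

section CompFactors

variable (A : Type u) [Ring A]

/-- The `i`-th factor of a series of submodules. -/
abbrev CompSeriesFactor {M : Type u} [AddCommGroup M] [Module A M]
    (s : CompositionSeries (Submodule A M)) (i : Fin s.length) : Type u :=
  ↥(s i.succ) ⧸ Submodule.comap (s i.succ).subtype (s i.castSucc)

open Classical in
/-- The multiplicity of `N` among the composition factors of `M` (returning `0` if `M`
has no composition series); by the Jordan–Hölder theorem this does not depend on the
choice of composition series. -/
def compMult (M : Type u) [AddCommGroup M] [Module A M]
    (N : Type u) [AddCommGroup N] [Module A N] : ℕ :=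
  if h : ∃ s : CompositionSeries (Submodule A M), s.head = ⊥ ∧ s.last = ⊤ then
    (Finset.univ.filter fun i : Fin h.choose.length =>
      Nonempty (CompSeriesFactor A h.choose i ≃ₗ[A] N)).card
  else 0

/-- `N` is (isomorphic to) a composition factor, i.e. a simple subquotient, of `M`. -/
def IsCompFactor (M N : Type u) [AddCommGroup M] [Module A M]
    [AddCommGroup N] [Module A N] : Prop :=
  ∃ p q : Submodule A M, p ≤ q ∧
    IsSimpleModule A (↥q ⧸ Submodule.comap q.subtype p) ∧
    Nonempty ((↥q ⧸ Submodule.comap q.subtype p) ≃ₗ[A] N)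

/-- `M₁` and `M₂` have a common composition factor. -/
def ShareFactor (M₁ M₂ : Type u) [AddCommGroup M₁] [Module A M₁]
    [AddCommGroup M₂] [Module A M₂] : Prop :=
  ∃ (p q : Submodule A M₁) (p' q' : Submodule A M₂), p ≤ q ∧ p' ≤ q' ∧
    IsSimpleModule A (↥q ⧸ Submodule.comap q.subtype p) ∧
    Nonempty ((↥q ⧸ Submodule.comap q.subtype p) ≃ₗ[A]
      (↥q' ⧸ Submodule.comap q'.subtype p'))

/-- `e` is a primitive central idempotent (a block idempotent) of `A`. -/
def IsPrimCentralIdem (e : A) : Prop :=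
  IsIdempotentElem e ∧ e ∈ Set.center A ∧ e ≠ 0 ∧
    ∀ f g : A, IsIdempotentElem f → IsIdempotentElem g → f ∈ Set.center A →
      g ∈ Set.center A → f * g = 0 → e = f + g → f = 0 ∨ g = 0

/-- A module belongs to the block of the central idempotent `e` when `e` acts as
the identity on it. -/
def InBlock (e : A) (M : Type u) [AddCommGroup M] [Module A M] : Prop :=
  ∀ m : M, e • m = m

/-- `P` is a projective cover of `L`. -/
def IsProjCover (P L : Type u) [AddCommGroup P] [Module A P]
    [AddCommGroup L] [Module A L] : Prop :=
  Module.Projective A P ∧ ∃ f : P →ₗ[A] L, Function.Surjective f ∧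
    ∀ N : Submodule A P, N ⊔ LinearMap.ker f = ⊤ → N = ⊤

end CompFactors

/-- The bilinear form on `ι → R` induced by a matrix `φ`. -/
def formSum {R ι : Type u} [CommRing R] [Fintype ι] (φ : ι → ι → R) (x y : ι → R) : R :=
  ∑ s, ∑ t, x s * φ s t * y t

section Cellular

variable (R A : Type u) [CommRing R] [Ring A] [Algebra R A]
variable (Λp : Type u) [PartialOrder Λp] (T : Λp → Type u) [∀ l, Fintype (T l)]

/-- A cell datum (Graham–Lehrer) for the `R`-algebra `A`: a cellular basis
`c l s t` indexed by pairs of elements of `T l` for `l` in the poset `Λp`, an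
anti-automorphism `star` swapping the two indices, and structure constants
`coeff` for right multiplication, acting on the second index modulo higher terms. -/
structure CellDatum where
  c : ∀ l, T l → T l → A
  basis : Module.Basis ((l : Λp) × (T l × T l)) R A
  basis_eq : ∀ l s t, basis ⟨l, (s, t)⟩ = c l s t
  star : A →ₗ[R] A
  star_mul : ∀ a b, star (a * b) = star b * star a
  star_c : ∀ l s t, star (c l s t) = c l t s
  coeff : ∀ l, T l → A → T l → R
  mul_rule : ∀ (l) (s t : T l) (a : A),
    c l s t * a - ∑ v, coeff l t a v • c l s v ∈
      Submodule.span R {x : A | ∃ l' s' t', l < l' ∧ x = c l' s' t'}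

variable {R A Λp T}

namespace CellDatum

variable (D : CellDatum R A Λp T)

/-- The span of the cellular basis elements with index strictly above `l`. -/
def Aup (l : Λp) : Submodule R A :=
  Submodule.span R {x : A | ∃ l' s' t', l < l' ∧ x = D.c l' s' t'}

/-- The span of the cellular basis elements with index in `P`. -/
def cellSpan (P : Set Λp) : Submodule R A :=
  Submodule.span R {x : A | ∃ l s t, l ∈ P ∧ x = D.c l s t}

/-- The data of right standard (cell) modules: each `T l → R` is a right `A`-module
(i.e. a module over `Aᵐᵒᵖ`), the action is `R`-bilinear, and on the standard basis it is
given by the structure constants of the cell datum. -/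
def RightStd [∀ l, DecidableEq (T l)] [∀ l, Module Aᵐᵒᵖ (T l → R)] : Prop :=
  (∀ (l : Λp) (r : R) (a : Aᵐᵒᵖ) (x : T l → R), a • (r • x) = r • (a • x)) ∧
  (∀ (l : Λp) (t : T l) (a : A),
    (op a) • (Pi.single t 1 : T l → R) = fun v => D.coeff l t a v)

/-- The data of left standard (cell) modules. -/
def LeftStd [∀ l, DecidableEq (T l)] [∀ l, Module A (T l → R)] : Prop :=
  (∀ (l : Λp) (r : R) (a : A) (x : T l → R), a • (r • x) = r • (a • x)) ∧
  (∀ (l : Λp) (t : T l) (a : A),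
    a • (Pi.single t 1 : T l → R) = fun v => D.coeff l t (D.star a) v)

/-- `φ` is the matrix of the canonical bilinear form on the standard modules:
`c l u s * c l t v ≡ φ l s t • c l u v` modulo `A^{∨l}`. -/
def FormData (φ : ∀ l, T l → T l → R) : Prop :=
  ∀ (l : Λp) (s t u v : T l), D.c l u s * D.c l t v - φ l s t • D.c l u v ∈ D.Aup l

section Idem

variable {Λt M X : Type u} [PartialOrder Λt] [PartialOrder X] [Fintype M]

/-- Assumptions (A1)–(A4): `ι : Λp → Λt` realizes the cell poset inside the
bigger poset `Λt`, `κ : M → Λt` realizes the index set of the orthogonal idempotent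
decomposition `1 = ∑ e μ`, each `e μ` lies in the span of the `c l s t` with
`ι l ≥ κ μ`, and every column of the cellular basis is fixed by some `e μ`. -/
structure IdemData (ι : Λp → Λt) (κ : M → Λt) (e : M → A) : Prop where
  order_iff : ∀ l l', ι l ≤ ι l' ↔ l ≤ l'
  kappa_inj : Function.Injective κ
  ne_zero : ∀ μ, e μ ≠ 0
  idem : ∀ μ, e μ * e μ = e μ
  orth : ∀ μ ν, μ ≠ ν → e μ * e ν = 0
  sum_one : ∑ μ, e μ = 1
  mem_span : ∀ μ, e μ ∈ Submodule.span R {x : A | ∃ l s t, κ μ ≤ ι l ∧ x = D.c l s t}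
  exists_idem : ∀ (l) (t : T l), ∃ μ, (∀ s, D.c l s t * e μ = D.c l s t) ∧
    (∀ u, e μ * D.c l t u = D.c l t u)

/-- `T(λ,μ)`: the indices `t` whose column (resp. row) of the cellular basis is fixed
by right (resp. left) multiplication by `e μ`. -/
def Tset (e : M → A) (l : Λp) (μ : M) : Set (T l) :=
  {t | (∀ s, D.c l s t * e μ = D.c l s t) ∧ (∀ u, e μ * D.c l t u = D.c l t u)}

/-- `T⁺_α(λ)`. -/
def Tplus (e : M → A) (ι : Λp → Λt) (κ : M → Λt) (α : Λt → X) (l : Λp) : Set (T l) :=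
  {t | ∃ μ, t ∈ D.Tset e l μ ∧ α (ι l) = α (κ μ)}

/-- `T⁻_α(λ)`. -/
def Tminus (e : M → A) (ι : Λp → Λt) (κ : M → Λt) (α : Λt → X) (l : Λp) : Set (T l) :=
  {t | ∃ μ, t ∈ D.Tset e l μ ∧ α (κ μ) < α (ι l)}

/-- `I(λ,ε)`: `T⁺_α(λ)` for `ε = false` and `T⁻_α(λ)` for `ε = true`. -/
def Iset (e : M → A) (ι : Λp → Λt) (κ : M → Λt) (α : Λt → X) (l : Λp) : Bool → Set (T l)
  | false => D.Tplus e ι κ α l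
  | true => D.Tminus e ι κ α l

/-- `J̃(λ,ε)`: `T⁺_α(λ)` for `ε = false` and all of `T(λ)` for `ε = true`. -/
def Jset (e : M → A) (ι : Λp → Λt) (κ : M → Λt) (α : Λt → X) (l : Λp) : Bool → Set (T l)
  | false => D.Tplus e ι κ α l
  | true => Set.univ

/-- The Levi type subalgebra `A^α` (as a submodule). -/
def levi (e : M → A) (ι : Λp → Λt) (κ : M → Λt) (α : Λt → X) : Submodule R A :=
  Submodule.span R {x : A | ∃ l ε s t, s ∈ D.Iset e ι κ α l ε ∧ t ∈ D.Iset e ι κ α l ε ∧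
    x = D.c l s t}

/-- The parabolic type subalgebra `Ã^α` (as a submodule). -/
def parab (e : M → A) (ι : Λp → Λt) (κ : M → Λt) (α : Λt → X) : Submodule R A :=
  Submodule.span R {x : A | ∃ l ε s t, s ∈ D.Iset e ι κ α l ε ∧ t ∈ D.Jset e ι κ α l ε ∧
    x = D.c l s t}

/-- The span of the elements of the cellular basis of `A^α` of index strictly
above `(l,ε)` in `Ω`. -/
def upperOm (e : M → A) (ι : Λp → Λt) (κ : M → Λt) (α : Λt → X) (p : Λp × Bool) :
    Submodule R A :=
  Submodule.span R {x : A | ∃ (q : Λp × Bool) (s t : T q.1),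
    ((p.2 < q.2) ∨ (p.2 = q.2 ∧ p.1 < q.1)) ∧
    s ∈ D.Iset e ι κ α q.1 q.2 ∧ t ∈ D.Iset e ι κ α q.1 q.2 ∧ x = D.c q.1 s t}

/-- The span of the elements of the standard basis of `Ã^α` of index strictly
above `(l,ε)` in `Ω`. -/
def upperOmParab (e : M → A) (ι : Λp → Λt) (κ : M → Λt) (α : Λt → X) (p : Λp × Bool) :
    Submodule R A :=
  Submodule.span R {x : A | ∃ (q : Λp × Bool) (s t : T q.1),
    ((p.2 < q.2) ∨ (p.2 = q.2 ∧ p.1 < q.1)) ∧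
    s ∈ D.Iset e ι κ α q.1 q.2 ∧ t ∈ D.Jset e ι κ α q.1 q.2 ∧ x = D.c q.1 s t}

end Idem

end CellDatum

end Cellular

/-!
For an upper set `P` of cell indices, the span of the cells `c λ s t` with `λ ∈ P` is a
two-sided ideal: a right ideal by the cellular multiplication rule, and a left ideal after
applying the anti-involution `star`. As the cells form a basis, `e μ` (which lies in the ideal
of cells above `κ μ`) can fix `c λ t t` only if `κ μ ≤ ι λ`. For (ii), the product lies in the
ideals above `λ₁` and above `λ₂`, hence in the span of the cells above both; multiplying by
`e μ₁` on the left and `e ν₂` on the right changes nothing, and it keeps a cell `c λ s t` when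
`s ∈ T(λ,μ₁)` and `t ∈ T(λ,ν₂)` and kills it otherwise, because every index is fixed by one of
the orthogonal idempotents `e`.
-/

namespace CellDatum

variable {R A : Type u} [CommRing R] [Ring A] [Algebra R A]
variable {Λp : Type u} [PartialOrder Λp] {T : Λp → Type u} [∀ l, Fintype (T l)]
variable (D : CellDatum R A Λp T)

open Set

theorem cellSpan_eq_span_basis_image (P : Set Λp) :
    D.cellSpan P = Submodule.span R (D.basis '' {i | i.1 ∈ P}) := by
  unfold cellSpan
  congr 1
  ext x
  constructor
  · rintro ⟨l, s, t, hl, rfl⟩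
    exact ⟨⟨l, (s, t)⟩, hl, D.basis_eq l s t⟩
  · rintro ⟨⟨l, s, t⟩, hl, rfl⟩
    exact ⟨l, s, t, hl, D.basis_eq l s t⟩

theorem mem_cellSpan_iff {P : Set Λp} {x : A} :
    x ∈ D.cellSpan P ↔ ∀ i ∈ (D.basis.repr x).support, i.1 ∈ P := by
  rw [cellSpan_eq_span_basis_image, Module.Basis.mem_span_image]
  rfl

theorem c_mem_cellSpan_iff [Nontrivial R] {P : Set Λp} {l : Λp} {s t : T l} :
    D.c l s t ∈ D.cellSpan P ↔ l ∈ P := by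
  rw [cellSpan_eq_span_basis_image, ← D.basis_eq, Module.Basis.self_mem_span_image]
  rfl

theorem cellSpan_inf (P Q : Set Λp) :
    D.cellSpan P ⊓ D.cellSpan Q = D.cellSpan (P ∩ Q) := by
  ext x
  simp only [Submodule.mem_inf, mem_cellSpan_iff, mem_inter_iff]
  exact forall₂_and.symm

theorem cellSpan_mono {P Q : Set Λp} (h : P ⊆ Q) : D.cellSpan P ≤ D.cellSpan Q :=
  Submodule.span_mono fun _ ⟨l, s, t, hl, hx⟩ => ⟨l, s, t, h hl, hx⟩

theorem c_mul_mem_cellSpan_Ici (l : Λp) (s t : T l) (a : A) :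
    D.c l s t * a ∈ D.cellSpan (Ici l) := by
  have hup : D.Aup l ≤ D.cellSpan (Ici l) :=
    Submodule.span_mono fun _ ⟨l', s', t', hl, hx⟩ => ⟨l', s', t', hl.le, hx⟩
  have hlead : ∑ v, D.coeff l t a v • D.c l s v ∈ D.cellSpan (Ici l) :=
    Submodule.sum_mem _ fun v _ =>
      Submodule.smul_mem _ _ (Submodule.subset_span ⟨l, s, v, le_rfl, rfl⟩)
  simpa using Submodule.add_mem _ (hup (D.mul_rule l s t a)) hlead

theorem mul_mem_cellSpan_right {P : Set Λp} (hP : IsUpperSet P) {x : A}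
    (hx : x ∈ D.cellSpan P) (a : A) : x * a ∈ D.cellSpan P := by
  induction hx using Submodule.span_induction with
  | mem y hy =>
    obtain ⟨l, s, t, hl, rfl⟩ := hy
    exact D.cellSpan_mono (fun _ hl' => hP hl' hl) (D.c_mul_mem_cellSpan_Ici l s t a)
  | zero => simp
  | add y z _ _ hy hz => rw [add_mul]; exact Submodule.add_mem _ hy hz
  | smul r y _ hy => rw [smul_mul_assoc]; exact Submodule.smul_mem _ _ hy

protected theorem star_star (x : A) : D.star (D.star x) = x := by
  have h : D.star.comp D.star = LinearMap.id :=
    D.basis.ext fun ⟨l, s, t⟩ => by simp [D.basis_eq, D.star_c]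
  exact LinearMap.congr_fun h x

theorem star_mem_cellSpan {P : Set Λp} {x : A} (hx : x ∈ D.cellSpan P) :
    D.star x ∈ D.cellSpan P := by
  rw [← Submodule.mem_comap]
  refine Submodule.span_le.2 ?_ hx
  rintro _ ⟨l, s, t, hl, rfl⟩
  rw [SetLike.mem_coe, Submodule.mem_comap, D.star_c]
  exact Submodule.subset_span ⟨l, t, s, hl, rfl⟩

theorem mul_mem_cellSpan_left {P : Set Λp} (hP : IsUpperSet P) {x : A}
    (hx : x ∈ D.cellSpan P) (a : A) : a * x ∈ D.cellSpan P := by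
  have h := D.star_mem_cellSpan <|
    D.mul_mem_cellSpan_right hP (D.star_mem_cellSpan hx) (D.star a)
  rwa [D.star_mul, D.star_star, D.star_star] at h

namespace IdemData

variable {D} {Λt M : Type u} [PartialOrder Λt] [Fintype M]
variable {ι : Λp → Λt} {κ : M → Λt} {e : M → A}

protected theorem nontrivial [Nonempty M] (hA : D.IdemData ι κ e) : Nontrivial R :=
  have : Nontrivial A := nontrivial_of_ne _ _ (hA.ne_zero (Classical.arbitrary M))
  Module.nontrivial R A

theorem mem_Tset_or_idem_mul_eq_zero (hA : D.IdemData ι κ e) {l : Λp} (s t : T l) (μ : M) :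
    s ∈ D.Tset e l μ ∨ e μ * D.c l s t = 0 := by
  obtain ⟨μ', hμ'⟩ := hA.exists_idem l s
  by_cases h : μ = μ'
  · exact .inl (h ▸ hμ')
  · right
    rw [← hμ'.2 t, ← mul_assoc, hA.orth μ μ' h, zero_mul]

theorem mem_Tset_or_mul_idem_eq_zero (hA : D.IdemData ι κ e) {l : Λp} (s t : T l) (ν : M) :
    t ∈ D.Tset e l ν ∨ D.c l s t * e ν = 0 := by
  obtain ⟨ν', hν'⟩ := hA.exists_idem l t
  by_cases h : ν' = ν
  · exact .inl (h ▸ hν')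
  · right
    rw [← hν'.1 s, mul_assoc, hA.orth ν' ν h, mul_zero]

theorem le_of_mem_Tset (hA : D.IdemData ι κ e) {l : Λp} {μ : M} {t : T l}
    (ht : t ∈ D.Tset e l μ) : κ μ ≤ ι l := by
  have : Nonempty M := ⟨μ⟩
  have := hA.nontrivial
  have hP : IsUpperSet {l' | κ μ ≤ ι l'} :=
    isUpperSet_Ici (κ μ) |>.preimage fun _ _ h => (hA.order_iff _ _).2 h
  have hmem := D.mul_mem_cellSpan_right hP (hA.mem_span μ) (D.c l t t)
  rwa [ht.2 t, c_mem_cellSpan_iff] at hmem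

theorem c_mul_c_eq_zero (hA : D.IdemData ι κ e) {l₁ l₂ : Λp} {s₁ t₁ : T l₁} {s₂ t₂ : T l₂}
    {ν₁ μ₂ : M} (ht₁ : t₁ ∈ D.Tset e l₁ ν₁) (hs₂ : s₂ ∈ D.Tset e l₂ μ₂) (hne : ν₁ ≠ μ₂) :
    D.c l₁ s₁ t₁ * D.c l₂ s₂ t₂ = 0 := by
  rw [← ht₁.1 s₁, ← hs₂.2 t₂, mul_assoc, ← mul_assoc (e ν₁), hA.orth ν₁ μ₂ hne,
    zero_mul, mul_zero]

theorem idem_mul_mul_idem_mem_span (hA : D.IdemData ι κ e) {P : Set Λp} {x : A}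
    (hx : x ∈ D.cellSpan P) (μ ν : M) :
    e μ * x * e ν ∈ Submodule.span R {y : A | ∃ (l : Λp) (s t : T l), l ∈ P ∧
      s ∈ D.Tset e l μ ∧ t ∈ D.Tset e l ν ∧ y = D.c l s t} := by
  induction hx using Submodule.span_induction with
  | mem y hy =>
    obtain ⟨l, s, t, hl, rfl⟩ := hy
    rcases hA.mem_Tset_or_idem_mul_eq_zero s t μ with hs | hs
    · rcases hA.mem_Tset_or_mul_idem_eq_zero s t ν with ht | ht
      · rw [hs.2 t, ht.1 s]
        exact Submodule.subset_span ⟨l, s, t, hl, hs, ht, rfl⟩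
      · rw [mul_assoc, ht, mul_zero]
        exact Submodule.zero_mem _
    · rw [hs, zero_mul]
      exact Submodule.zero_mem _
  | zero => simp
  | add y z _ _ hy hz => rw [mul_add, add_mul]; exact Submodule.add_mem _ hy hz
  | smul r y _ hy => rw [mul_smul_comm, smul_mul_assoc]; exact Submodule.smul_mem _ _ hy

end IdemData

end CellDatum

theorem stmt_6_general
    {R A : Type u} [CommRing R] [Ring A] [Algebra R A]
    {Λp : Type u} [PartialOrder Λp]
    {T : Λp → Type u} [∀ l, Fintype (T l)]
    {Λt M : Type u} [PartialOrder Λt] [Fintype M]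
    (D : CellDatum R A Λp T)
    (ι : Λp → Λt) (κ : M → Λt) (e : M → A)
    (hA : D.IdemData ι κ e) :
    (∀ (l : Λp) (μ : M), (D.Tset e l μ).Nonempty → κ μ ≤ ι l) ∧
    (∀ (l₁ l₂ : Λp) (μ₁ ν₁ μ₂ ν₂ : M) (s₁ t₁ : T l₁) (s₂ t₂ : T l₂),
      s₁ ∈ D.Tset e l₁ μ₁ → t₁ ∈ D.Tset e l₁ ν₁ →
      s₂ ∈ D.Tset e l₂ μ₂ → t₂ ∈ D.Tset e l₂ ν₂ →
      (ν₁ ≠ μ₂ → D.c l₁ s₁ t₁ * D.c l₂ s₂ t₂ = 0) ∧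
      D.c l₁ s₁ t₁ * D.c l₂ s₂ t₂ ∈
        Submodule.span R {x : A | ∃ (l : Λp) (s t : T l), l₁ ≤ l ∧ l₂ ≤ l ∧
          s ∈ D.Tset e l μ₁ ∧ t ∈ D.Tset e l ν₂ ∧ x = D.c l s t}) := by
  refine ⟨fun l μ ⟨t, ht⟩ => hA.le_of_mem_Tset ht, ?_⟩
  intro l₁ l₂ μ₁ ν₁ μ₂ ν₂ s₁ t₁ s₂ t₂ hs₁ ht₁ hs₂ ht₂
  refine ⟨hA.c_mul_c_eq_zero ht₁ hs₂, ?_⟩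
  have hx : D.c l₁ s₁ t₁ * D.c l₂ s₂ t₂ ∈ D.cellSpan (Set.Ici l₁ ∩ Set.Ici l₂) := by
    rw [← D.cellSpan_inf]
    exact ⟨D.c_mul_mem_cellSpan_Ici l₁ s₁ t₁ _, D.mul_mem_cellSpan_left (isUpperSet_Ici l₂)
      (Submodule.subset_span ⟨l₂, s₂, t₂, le_rfl, rfl⟩) _⟩
  have hfix : D.c l₁ s₁ t₁ * D.c l₂ s₂ t₂ = e μ₁ * (D.c l₁ s₁ t₁ * D.c l₂ s₂ t₂) * e ν₂ := by
    rw [← mul_assoc, hs₁.2 t₁, mul_assoc, ht₂.1 s₂]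
  rw [hfix]
  refine Submodule.span_mono ?_ (hA.idem_mul_mul_idem_mem_span hx μ₁ ν₂)
  rintro _ ⟨l, s, t, ⟨hl₁, hl₂⟩, hs, ht, rfl⟩
  exact ⟨l, s, t, hl₁, hl₂, hs, ht, rfl⟩

/-- under (A1)–(A4): (i) if `T(λ,μ) ≠ ∅` then `λ ≥ μ` in `Λ̃`; (ii) for
`s_i ∈ T(λ_i,μ_i)`, `t_i ∈ T(λ_i,ν_i)`, the product `c^{λ₁}_{s₁t₁} c^{λ₂}_{s₂t₂}`
vanishes unless `ν₁ = μ₂`, and in any case lies in the span of the `c^λ_{st}` with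
`λ ≥ λ₁`, `λ ≥ λ₂`, `s ∈ T(λ,μ₁)` and `t ∈ T(λ,ν₂)`. -/
theorem stmt_6
    {R A : Type u} [CommRing R] [Ring A] [Algebra R A]
    {Λp : Type u} [PartialOrder Λp] [Fintype Λp]
    {T : Λp → Type u} [∀ l, Fintype (T l)]
    {Λt M : Type u} [PartialOrder Λt] [Fintype M]
    (D : CellDatum R A Λp T)
    (ι : Λp → Λt) (κ : M → Λt) (e : M → A)
    (hA : D.IdemData ι κ e) :
    (∀ (l : Λp) (μ : M), (D.Tset e l μ).Nonempty → κ μ ≤ ι l) ∧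
    (∀ (l₁ l₂ : Λp) (μ₁ ν₁ μ₂ ν₂ : M) (s₁ t₁ : T l₁) (s₂ t₂ : T l₂),
      s₁ ∈ D.Tset e l₁ μ₁ → t₁ ∈ D.Tset e l₁ ν₁ →
      s₂ ∈ D.Tset e l₂ μ₂ → t₂ ∈ D.Tset e l₂ ν₂ →
      (ν₁ ≠ μ₂ → D.c l₁ s₁ t₁ * D.c l₂ s₂ t₂ = 0) ∧
      D.c l₁ s₁ t₁ * D.c l₂ s₂ t₂ ∈
        Submodule.span R {x : A | ∃ (l : Λp) (s t : T l), l₁ ≤ l ∧ l₂ ≤ l ∧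
          s ∈ D.Tset e l μ₁ ∧ t ∈ D.Tset e l ν₂ ∧ x = D.c l s t}) :=
  stmt_6_general D ι κ e hA
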